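/- Let L = ℚ(6^{1/4}, i) ⊆ ℂ and let K₂ = ℚ(i) viewed as a subfield of L. Then the Galois group Gal(L/K₂) is cyclic of order 4. -/

import Mathlib

/-- `L = ℚ(6^{1/4}, i)`, the intermediate field of `ℂ/ℚ` generated by the
positive real fourth root of `6` and the imaginary unit `i`. -/
noncomputable def L : IntermediateField ℚ ℂ :=
  IntermediateField.adjoin ℚ {(((6 : ℝ) ^ ((1 : ℝ) / 4) : ℝ) : ℂ), Complex.I}

open Polynomial IntermediateField

/-- positive real fourth root of 6, as a complex number -/
noncomputable def αC : ℂ := ((6 : ℝ) ^ ((1 : ℝ) / 4) : ℝ)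

lemma alpha_pow : αC ^ 4 = 6 := by
  have h : ((6:ℝ) ^ ((1:ℝ)/4)) ^ (4:ℕ) = 6 := by
    rw [← Real.rpow_natCast ((6:ℝ) ^ ((1:ℝ)/4)) 4, ← Real.rpow_mul (by norm_num)]
    norm_num
  unfold αC
  exact_mod_cast h

lemma monicZ : ((X:ℤ[X]) ^ 4 - C 6).Monic := monic_X_pow_sub_C 6 (by norm_num)

lemma irrZ : Irreducible ((X:ℤ[X]) ^ 4 - C 6) := by
  have hEis : ((X:ℤ[X]) ^ 4 - C 6).IsEisensteinAt (Ideal.span {2}) := by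
    constructor
    · rw [monicZ.leadingCoeff, Ideal.mem_span_singleton]
      norm_num
    · intro n hn
      rw [natDegree_X_pow_sub_C] at hn
      rw [Ideal.mem_span_singleton]
      interval_cases n <;> simp [coeff_X_pow] <;> norm_num
    · rw [Ideal.span_singleton_pow, Ideal.mem_span_singleton]
      simp [coeff_X_pow]
  exact hEis.irreducible (Ideal.span_singleton_prime (by norm_num) |>.mpr Int.prime_two)
    monicZ.isPrimitive (by rw [natDegree_X_pow_sub_C]; norm_num)

lemma irrQ : Irreducible ((X:ℚ[X]) ^ 4 - C 6) := by
  have := (Polynomial.IsPrimitive.Int.irreducible_iff_irreducible_map_cast monicZ.isPrimitive).mp irrZ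
  have heq : ((X:ℤ[X]) ^ 4 - C 6).map (Int.castRingHom ℚ) = (X:ℚ[X]) ^ 4 - C 6 := by
    simp only [Polynomial.map_sub, Polynomial.map_pow, map_X, map_C]
    norm_num
  rwa [heq] at this

section helpers
variable {K E : Type*} [Field K] [Field E] [Algebra K E]

lemma deg2 {x : E} (hx : x ^ 2 = -1) (hx' : x ∉ Set.range (algebraMap K E)) :
    (minpoly K x).natDegree = 2 := by
  have hconst : eval₂ (algebraMap K E) x (X ^ 2 - C (-1)) = 0 := by
    simp [hx]
  have hint : IsIntegral K x := ⟨X ^ 2 - C (-1), monic_X_pow_sub_C _ (by norm_num), hconst⟩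
  have hdvd : minpoly K x ∣ X ^ 2 - C (-1) := minpoly.dvd _ _ (by simpa [aeval_def] using hconst)
  have hle : (minpoly K x).natDegree ≤ 2 := by
    have := natDegree_le_of_dvd hdvd (X_pow_sub_C_ne_zero (by norm_num) _)
    rwa [natDegree_X_pow_sub_C] at this
  have hge : 2 ≤ (minpoly K x).natDegree :=
    (minpoly.two_le_natDegree_iff hint).mpr (by simpa [Set.mem_range] using hx')
  omega

lemma prim4 {x : K} (hchar : (-1 : K) ≠ 1) (hx : x ^ 2 = -1) : IsPrimitiveRoot x 4 := by
  have hx4 : x ^ 4 = 1 := by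
    rw [show (4 : ℕ) = 2 * 2 from rfl, pow_mul, hx]; ring
  have hxne1 : x ≠ 1 := fun h => hchar (by rw [← hx, h, one_pow])
  have hx2 : x ^ 2 ≠ 1 := by rw [hx]; exact hchar
  have hx3 : x ^ 3 ≠ 1 := by
    intro h
    apply hxne1
    have : x ^ 4 = x := by rw [show (4:ℕ) = 3 + 1 from rfl, pow_succ, h, one_mul]
    rw [hx4] at this; exact this.symm
  constructor
  · exact hx4
  · intro l hl
    have hmod : x ^ (l % 4) = 1 := by
      conv at hl => rw [← Nat.div_add_mod l 4]
      rwa [pow_add, pow_mul, hx4, one_pow, one_mul] at hl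
    have h4 : l % 4 = 0 ∨ l % 4 = 1 ∨ l % 4 = 2 ∨ l % 4 = 3 := by omega
    rcases h4 with h | h | h | h
    · exact Nat.dvd_of_mod_eq_zero h
    · rw [h, pow_one] at hmod; exact absurd hmod hxne1
    · rw [h] at hmod; exact absurd hmod hx2
    · rw [h] at hmod; exact absurd hmod hx3

end helpers

/-- the subfield of real numbers, as an intermediate field of ℂ/ℚ -/
noncomputable def Rf : IntermediateField ℚ ℂ :=
  Subfield.toIntermediateField Complex.ofRealHom.fieldRange
    (fun x => ⟨(x : ℝ), by simp⟩)

lemma mem_Rf_im {z : ℂ} (hz : z ∈ Rf) : z.im = 0 := by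
  obtain ⟨r, hr⟩ := hz
  rw [← hr]; simp

lemma alpha_mem_Rf : αC ∈ Rf := ⟨(6:ℝ) ^ ((1:ℝ)/4), rfl⟩

lemma alpha_mem_L : αC ∈ L := subset_adjoin ℚ _ (by left; rfl)

lemma I_mem_L : Complex.I ∈ L := subset_adjoin ℚ _ (by right; rfl)

set_option maxHeartbeats 1000000 in
set_option synthInstance.maxHeartbeats 1000000 in
/-- With `K₂ = ℚ(i)` viewed as a subfield of `L = ℚ(6^{1/4}, i)`, the Galois
group `Gal(L/K₂)` is cyclic of order `4`. -/
theorem stmt_4 (i : L) (hi : (i : ℂ) = Complex.I)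
    (K₂ : IntermediateField ℚ L) (hK₂ : K₂ = IntermediateField.adjoin ℚ {i}) :
    IsCyclic (L ≃ₐ[{ x // x ∈ K₂ }] L) ∧ Nat.card (L ≃ₐ[{ x // x ∈ K₂ }] L) = 4 := by
  subst hK₂
  set αL : L := ⟨αC, alpha_mem_L⟩ with hαL
  -- basic facts
  have hisq : i ^ 2 = -1 := by
    apply Subtype.val_injective
    push_cast [hi]
    rw [Complex.I_sq]
  have hαL4 : αL ^ 4 = 6 := by
    apply Subtype.val_injective
    push_cast [hαL]
    exact alpha_pow
  -- finite dimensionality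
  have hintαC : IsIntegral ℚ αC :=
    ⟨X ^ 4 - C 6, monic_X_pow_sub_C _ (by norm_num), by simp [alpha_pow]⟩
  have hintI : IsIntegral ℚ Complex.I :=
    ⟨X ^ 2 - C (-1), monic_X_pow_sub_C _ (by norm_num), by simp [Complex.I_sq]⟩
  haveI : FiniteDimensional ℚ L := by
    apply IntermediateField.finiteDimensional_adjoin
    rintro x hx
    rcases hx with rfl | hx
    · exact hintαC
    · rcases hx with rfl
      exact hintI
  -- minpoly of αC over ℚ
  have hminα : minpoly ℚ αC = X ^ 4 - C 6 :=
    (minpoly.eq_of_irreducible_of_monic irrQ (by simp [alpha_pow])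
      (monic_X_pow_sub_C _ (by norm_num))).symm
  -- top adjunction : ℚ(αL, i) = ⊤ inside L
  have himg : (Subtype.val '' {αL, i} : Set ℂ) = {αC, Complex.I} := by
    rw [Set.image_insert_eq, Set.image_singleton, hi]
  have htop : IntermediateField.adjoin ℚ {αL, i} = ⊤ := by
    apply IntermediateField.map_injective L.val
    rw [show (IntermediateField.map L.val) = IntermediateField.lift from rfl]
    erw [IntermediateField.lift_adjoin, IntermediateField.lift_top, himg]
    rfl
  -- minpoly of αL over ℚ
  have hintαL : IsIntegral ℚ αL := IsIntegral.of_finite ℚ αL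
  have hminαL : minpoly ℚ αL = X ^ 4 - C 6 := by
    have h := minpoly.algebraMap_eq (algebraMap (↥L) ℂ).injective αL (A := ℚ)
    have hcoe : (algebraMap (↥L) ℂ) αL = αC := rfl
    rw [← h, hcoe, hminα]
  have hfinF' : Module.finrank ℚ (↥(IntermediateField.adjoin ℚ {αL})) = 4 := by
    rw [IntermediateField.adjoin.finrank hintαL, hminαL, natDegree_X_pow_sub_C]
  have hliftF' : IntermediateField.lift (IntermediateField.adjoin ℚ {αL})
      = IntermediateField.adjoin ℚ {αC} := by
    rw [IntermediateField.lift_adjoin, Set.image_singleton]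
  have hInotF' : i ∉ Set.range (algebraMap (↥(IntermediateField.adjoin ℚ {αL})) (↥L)) := by
    rintro ⟨y, hy⟩
    have hiF : (i : L) ∈ IntermediateField.adjoin ℚ {αL} := by rw [← hy]; exact y.2
    have h1 : (i : ℂ) ∈ IntermediateField.lift (IntermediateField.adjoin ℚ {αL}) :=
      ⟨i, hiF, rfl⟩
    rw [hliftF', hi] at h1
    have hle : IntermediateField.adjoin ℚ {αC} ≤ Rf :=
      IntermediateField.adjoin_le_iff.mpr (by
        intro x hx
        rcases hx with rfl
        exact alpha_mem_Rf)
    have := mem_Rf_im (hle h1)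
    simp [Complex.I_im] at this
  have hFItop : IntermediateField.adjoin (↥(IntermediateField.adjoin ℚ {αL})) {i} = ⊤ := by
    apply IntermediateField.restrictScalars_injective ℚ
    erw [IntermediateField.adjoin_adjoin_left, IntermediateField.restrictScalars_top,
      Set.singleton_union, htop]
  haveI : FiniteDimensional (↥(IntermediateField.adjoin ℚ {αL})) (↥L) :=
    FiniteDimensional.right ℚ _ _
  have hfinL : Module.finrank ℚ (↥L) = 8 := by
    have ht := Module.finrank_mul_finrank ℚ (↥(IntermediateField.adjoin ℚ {αL})) (↥L)
    have h2 : Module.finrank (↥(IntermediateField.adjoin ℚ {αL})) (↥L) = 2 := by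
      have hint_i : IsIntegral (↥(IntermediateField.adjoin ℚ {αL})) i := IsIntegral.of_finite _ _
      have h3 := IntermediateField.adjoin.finrank hint_i
      rw [hFItop, IntermediateField.finrank_top'] at h3
      rw [h3, deg2 hisq hInotF']
    rw [h2, hfinF'] at ht
    omega
  -- K₂ = ℚ(i)
  have hinotQ : i ∉ Set.range (algebraMap ℚ (↥L)) := by
    rintro ⟨q, hq⟩
    have h1 : (i : ℂ) = algebraMap ℚ ℂ q := by
      rw [← hq, IsScalarTower.algebraMap_apply ℚ (↥L) ℂ q]
      rfl
    rw [hi] at h1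
    have := congrArg Complex.im h1
    simp at this
  have hfinK : Module.finrank ℚ (↥(IntermediateField.adjoin ℚ {i})) = 2 := by
    rw [IntermediateField.adjoin.finrank (IsIntegral.of_finite ℚ i), deg2 hisq hinotQ]
  haveI : FiniteDimensional (↥(IntermediateField.adjoin ℚ {i})) (↥L) :=
    FiniteDimensional.right ℚ _ _
  have hfin : Module.finrank (↥(IntermediateField.adjoin ℚ {i})) (↥L) = 4 := by
    have ht := Module.finrank_mul_finrank ℚ (↥(IntermediateField.adjoin ℚ {i})) (↥L)
    rw [hfinK, hfinL] at ht
    omega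
  -- K₂(αL) = ⊤
  have hK2top : IntermediateField.adjoin (↥(IntermediateField.adjoin ℚ {i})) {αL} = ⊤ := by
    apply IntermediateField.restrictScalars_injective ℚ
    erw [IntermediateField.adjoin_adjoin_left, IntermediateField.restrictScalars_top,
      Set.singleton_union, Set.pair_comm, htop]
  have ha : αL ^ Module.finrank (↥(IntermediateField.adjoin ℚ {i})) (↥L) =
      algebraMap (↥(IntermediateField.adjoin ℚ {i})) (↥L) 6 := by
    rw [hfin, hαL4]
    exact (map_ofNat _ 6).symm
  -- primitive fourth root of unity in K₂
  haveI : CharZero (↥(IntermediateField.adjoin ℚ {i})) :=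
    charZero_of_injective_algebraMap (algebraMap ℚ _).injective
  set ζ : ↥(IntermediateField.adjoin ℚ {i}) := ⟨i, IntermediateField.mem_adjoin_simple_self ℚ i⟩
    with hζ
  have hζsq : ζ ^ 2 = -1 := by
    apply Subtype.val_injective
    push_cast [hζ]
    exact hisq
  have hζprim : IsPrimitiveRoot ζ 4 := prim4 (by norm_num) hζsq
  have hK : (primitiveRoots (Module.finrank (↥(IntermediateField.adjoin ℚ {i})) (↥L))
      (↥(IntermediateField.adjoin ℚ {i}))).Nonempty := by
    rw [hfin]
    exact ⟨ζ, (mem_primitiveRoots (by norm_num)).mpr hζprim⟩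
  have H := irreducible_X_pow_sub_C_of_root_adjoin_eq_top ha hK2top
  haveI := isSplittingField_X_pow_sub_C_of_root_adjoin_eq_top hK ha hK2top
  haveI : NeZero (Module.finrank (↥(IntermediateField.adjoin ℚ {i})) (↥L)) :=
    ⟨by rw [hfin]; norm_num⟩
  haveI := isGalois_of_isSplittingField_X_pow_sub_C hK H (↥L)
  refine ⟨isCyclic_of_isSplittingField_X_pow_sub_C hK H (↥L), ?_⟩
  rw [IsGalois.card_aut_eq_finrank, hfin]
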